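/- Let G be a finite connected bipartite simple graph with parts A and B, so that every edge of G joins a vertex of A to a vertex of B, and assume no vertex of G has valency larger than 3. Let n be the cardinality of B and let r be the number of endpoints of G lying in B. If 4r = 3(n + 1), then G is a tree, every vertex in A has valency 3, and every vertex in B has valency 3 or 1. -/

import Mathlib

/-!
Count the edges from both sides of the bipartition: `∑_{A} deg = ∑_{B} deg = |E|`. The degree
bound gives `|E| ≤ 3|A|` and `|E| + 2r ≤ 3n` (an endpoint of `B` falls short of 3 by exactly 2),
while connectivity gives `|A| + n ≤ |E| + 1`. The first plus twice the second plus three times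
the third is `4r ≤ 3(n + 1)`, so the hypothesis forces all three to be equalities: the last says
that `G` is a tree, the first that every vertex of `A` has valency 3, and the second that every
vertex of `B` has valency 1 or 3.
-/

open SimpleGraph Finset

namespace Finset

variable {ι : Type*} (s : Finset ι) {f : ι → ℕ}

theorem eq_of_le_of_mul_card_le_sum {c : ℕ} (hf : ∀ i ∈ s, f i ≤ c)
    (hsum : c * #s ≤ ∑ i ∈ s, f i) : ∀ i ∈ s, f i = c := by
  refine (sum_eq_sum_iff_of_le hf).1 (le_antisymm (sum_le_sum hf) ?_)
  rwa [sum_const, smul_eq_mul, mul_comm]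

theorem sum_add_two_mul_card_filter_eq_one (f : ι → ℕ) :
    ∑ i ∈ s, f i + 2 * #{i ∈ s | f i = 1} = ∑ i ∈ s, (f i + if f i = 1 then 2 else 0) := by
  rw [card_filter, mul_sum, ← sum_add_distrib]
  refine sum_congr rfl fun i _ => ?_
  split_ifs <;> rfl

theorem sum_add_two_mul_card_filter_eq_one_le (hf : ∀ i ∈ s, f i ≤ 3) :
    ∑ i ∈ s, f i + 2 * #{i ∈ s | f i = 1} ≤ 3 * #s := by
  rw [sum_add_two_mul_card_filter_eq_one, mul_comm, ← smul_eq_mul]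
  refine sum_le_card_nsmul _ _ _ fun i hi => ?_
  have := hf i hi
  split_ifs <;> omega

theorem eq_three_or_eq_one_of_three_mul_card_le (hf : ∀ i ∈ s, f i ≤ 3)
    (hsum : 3 * #s ≤ ∑ i ∈ s, f i + 2 * #{i ∈ s | f i = 1}) :
    ∀ i ∈ s, f i = 3 ∨ f i = 1 := by
  rw [sum_add_two_mul_card_filter_eq_one] at hsum
  have hg : ∀ i ∈ s, (f i + if f i = 1 then 2 else 0) ≤ 3 := fun i hi => by
    have := hf i hi
    split_ifs <;> omega
  intro i hi
  have := eq_of_le_of_mul_card_le_sum s hg hsum i hi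
  split_ifs at this <;> omega

end Finset

namespace SimpleGraph

variable {V : Type*} [Fintype V] {G : SimpleGraph V} [Fintype G.edgeSet]

theorem Connected.card_le_card_edgeFinset_add_one (h : G.Connected) :
    Fintype.card V ≤ #G.edgeFinset + 1 := by
  simpa [Nat.card_eq_fintype_card, edgeFinset_card] using h.card_vert_le_card_edgeSet_add_one

theorem isTree_iff_connected_and_card_edgeFinset :
    G.IsTree ↔ G.Connected ∧ #G.edgeFinset + 1 = Fintype.card V := by
  simp [isTree_iff_connected_and_card, Nat.card_eq_fintype_card, edgeFinset_card]

end SimpleGraph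

/-- Let `G` be a finite connected bipartite simple graph with parts `A`
and `B`, so that every edge of `G` joins a vertex of `A` to a vertex of `B`, and assume no
vertex of `G` has valency larger than 3. Let `n` be the cardinality of `B` and `r` the
number of endpoints of `G` lying in `B`. If `4 * r = 3 * (n + 1)`, then `G` is a tree,
every vertex in `A` has valency 3, and every vertex in `B` has valency 3 or 1. -/
theorem tree_of_equality_in_bipartite_cubic_graph {V : Type*} [Fintype V] [DecidableEq V]
    (G : SimpleGraph V) [DecidableRel G.Adj]
    (A B : Finset V) (hdisj : Disjoint A B) (hcover : A ∪ B = Finset.univ)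
    (hbip : ∀ u v, G.Adj u v → (u ∈ A ∧ v ∈ B) ∨ (u ∈ B ∧ v ∈ A))
    (hconn : G.Connected) (hdeg : ∀ v, G.degree v ≤ 3)
    (n r : ℕ)
    (hn : n = B.card)
    (hr : r = (B.filter fun v => G.degree v = 1).card)
    (heq : 4 * r = 3 * (n + 1)) :
    G.IsTree ∧ (∀ v ∈ A, G.degree v = 3) ∧ (∀ v ∈ B, G.degree v = 3 ∨ G.degree v = 1) := by
  subst hn hr
  have hAB : G.IsBipartiteWith A B :=
    ⟨disjoint_coe.2 hdisj, fun u v huv => by simpa using hbip u v huv⟩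
  have hcard : Fintype.card V = #A + #B := by
    rw [← card_union_of_disjoint hdisj, hcover, card_univ]
  have hsumA := isBipartiteWith_sum_degrees_eq_card_edges hAB
  have hsumB := isBipartiteWith_sum_degrees_eq_card_edges' hAB
  have hA : ∑ v ∈ A, G.degree v ≤ 3 * #A := by
    simpa [mul_comm] using A.sum_le_card_nsmul _ 3 fun v _ => hdeg v
  have hB := B.sum_add_two_mul_card_filter_eq_one_le fun v _ => hdeg v
  have hE := hconn.card_le_card_edgeFinset_add_one
  refine ⟨isTree_iff_connected_and_card_edgeFinset.2 ⟨hconn, by omega⟩,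
    A.eq_of_le_of_mul_card_le_sum (fun v _ => hdeg v) (by omega),
    B.eq_three_or_eq_one_of_three_mul_card_le (fun v _ => hdeg v) (by omega)⟩
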